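/- Let H, K be closed subspaces of L², C_K an antilinear unitary on K, F : H → K a bounded invertible operator, E = F*, and define C_H = F⁻¹ ∘ C_K ∘ F. Then the following are equivalent: (a) C_H is an antilinear unitary on H; (b) C_K ∘ (F E) = (F E) ∘ C_K; (c) C_H = E ∘ C_K ∘ E⁻¹. -/

import Mathlib

open MeasureTheory

noncomputable section

/-! ## Setup: the circle, L², L∞, multiplication operators, Hardy space,
model spaces, and generalized Toeplitz operators -/

instance : Fact (0 < 2 * Real.pi) := ⟨by positivity⟩

/-- The normalized Lebesgue (Haar) measure `dθ/2π` on the circle. -/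
abbrev μH : Measure (AddCircle (2 * Real.pi)) := AddCircle.haarAddCircle

/-- The Lebesgue space `L²` of the circle. -/
abbrev L2 : Type := Lp ℂ 2 μH

/-- The space `L∞` of essentially bounded functions on the circle. -/
abbrev Linf : Type := Lp ℂ ⊤ μH

/-- Pointwise (a.e.) multiplication on `L∞`. -/
instance : Mul Linf :=
  ⟨fun f g => ((Lp.memLp g).smul (r := ⊤) (Lp.memLp f)).toLp (⇑f • ⇑g)⟩

/-- The constant function `1` as an element of `L∞`. -/
instance : One Linf := ⟨(memLp_const (1 : ℂ)).toLp (fun _ => (1 : ℂ))⟩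

/-- Complex conjugation on `L∞`. -/
instance : Star Linf :=
  ⟨fun f => ((Complex.conjCLE.toContinuousLinearMap).comp_memLp' (Lp.memLp f)).toLp
    ((starRingEnd ℂ) ∘ ⇑f)⟩

/-- Multiplication of an `L²` function by an `L∞` function. -/
def mulFun (φ : Linf) (f : L2) : L2 :=
  ((Lp.memLp f).smul (r := 2) (Lp.memLp φ)).toLp (⇑φ • ⇑f)

lemma mulFun_coe (φ : Linf) (f : L2) : mulFun φ f =ᵐ[μH] ⇑φ • ⇑f :=
  MemLp.coeFn_toLp _

lemma mulFun_norm_le (φ : Linf) (f : L2) : ‖mulFun φ f‖ ≤ ‖φ‖ * ‖f‖ := by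
  rw [mulFun, Lp.norm_toLp, Lp.norm_def, Lp.norm_def, ← ENNReal.toReal_mul]
  refine ENNReal.toReal_mono ?_ ?_
  · exact ENNReal.mul_ne_top (Lp.eLpNorm_ne_top φ) (Lp.eLpNorm_ne_top f)
  · exact eLpNorm_smul_le_eLpNorm_top_mul_eLpNorm 2 (Lp.aestronglyMeasurable f) ⇑φ

/-- The bounded multiplication operator `M_φ : L² → L²` for `φ ∈ L∞`. -/
def mulCLM (φ : Linf) : L2 →L[ℂ] L2 :=
  LinearMap.mkContinuous
    { toFun := mulFun φ
      map_add' := by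
        intro f g
        apply Lp.ext
        filter_upwards [mulFun_coe φ (f + g), mulFun_coe φ f, mulFun_coe φ g,
          Lp.coeFn_add f g, Lp.coeFn_add (mulFun φ f) (mulFun φ g)] with x h1 h2 h3 h4 h5
        simp only [Pi.smul_apply', Pi.add_apply] at *
        rw [h1, h5, h2, h3, h4]
        exact smul_add _ _ _
      map_smul' := by
        intro c f
        apply Lp.ext
        filter_upwards [mulFun_coe φ (c • f), mulFun_coe φ f,
          Lp.coeFn_smul c f, Lp.coeFn_smul c (mulFun φ f)] with x h1 h2 h3 h4
        simp only [Pi.smul_apply', Pi.smul_apply, RingHom.id_apply] at *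
        rw [h1, h4, h2, h3]
        exact smul_comm _ _ _ }
    ‖φ‖ (mulFun_norm_le φ)

/-- The image `a·K = {a f : f ∈ K}` of a subspace `K ⊆ L²` under multiplication by `a ∈ L∞`. -/
def smulSub (a : Linf) (K : Submodule ℂ L2) : Submodule ℂ L2 :=
  K.map (mulCLM a : L2 →ₗ[ℂ] L2)

/-- The Hardy space `H² = {f ∈ L² : f̂(n) = 0 for n < 0}`. -/
def Hardy : Submodule ℂ L2 where
  carrier := {f | ∀ n : ℤ, n < 0 → fourierBasis.repr f n = 0}
  add_mem' := by
    intro f g hf hg n hn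
    rw [map_add, lp.coeFn_add, Pi.add_apply, hf n hn, hg n hn, add_zero]
  zero_mem' := by
    intro n hn
    rw [map_zero, lp.coeFn_zero]
    rfl
  smul_mem' := by
    intro c f hf n hn
    rw [_root_.map_smul, lp.coeFn_smul, Pi.smul_apply, hf n hn, smul_zero]

lemma hardy_isClosed : IsClosed (Hardy : Set L2) := by
  have h : (Hardy : Set L2) =
      ⋂ n : {m : ℤ // m < 0}, {f : L2 | fourierBasis.repr f n.1 = 0} := by
    ext f
    constructor
    · intro hf
      exact Set.mem_iInter.2 fun n => hf n.1 n.2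
    · intro hf n hn
      exact Set.mem_iInter.1 hf ⟨n, hn⟩
  rw [h]
  refine isClosed_iInter fun n => isClosed_eq ?_ continuous_const
  have : (fun f : L2 => fourierBasis.repr f n.1) =
      fun f : L2 => (innerSL ℂ (fourierBasis n.1)) f := by
    funext f
    exact fourierBasis.repr_apply_apply f n.1
  rw [this]
  exact (innerSL ℂ (fourierBasis n.1)).continuous

instance : CompleteSpace Hardy := hardy_isClosed.completeSpace_coe

/-- The model space `K_θ = H² ⊖ θH² = H² ∩ (θH²)^⊥`. -/
def modelSpace (θ : Linf) : Submodule ℂ L2 :=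
  Hardy ⊓ (smulSub θ Hardy)ᗮ

instance (θ : Linf) : CompleteSpace (modelSpace θ) := by
  refine IsClosed.completeSpace_coe (hs := ?_)
  have h : (modelSpace θ : Set L2) = (Hardy : Set L2) ∩ ((smulSub θ Hardy)ᗮ : Set L2) := rfl
  rw [h]
  exact hardy_isClosed.inter (smulSub θ Hardy).isClosed_orthogonal

/-- The generalized Toeplitz operator `T_φ^{H₁,H₂} = P_{H₂} M_φ |_{H₁}`. -/
def genToeplitz (φ : Linf) (H₁ H₂ : Submodule ℂ L2) [CompleteSpace H₂] : H₁ →L[ℂ] H₂ :=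
  (Submodule.orthogonalProjectionOnto H₂).comp ((mulCLM φ).comp H₁.subtypeL)

/-- The orthogonal projection of `L²` onto `H`, viewed as an operator `L² → L²`. -/
def projL (H : Submodule ℂ L2) [CompleteSpace H] : L2 →L[ℂ] L2 :=
  H.subtypeL.comp (Submodule.orthogonalProjectionOnto H)

/-- `φ ∈ H∞`: all negative Fourier coefficients of `φ` vanish. -/
def IsHardyInf (φ : Linf) : Prop := ∀ n : ℤ, n < 0 → fourierCoeff (⇑φ) n = 0

/-- `θ` is an inner function: `θ ∈ H∞` and `|θ| = 1` a.e. on the circle. -/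
def IsInner (θ : Linf) : Prop :=
  IsHardyInf θ ∧ ∀ᵐ x ∂μH, ‖(θ : AddCircle (2 * Real.pi) → ℂ) x‖ = 1

/-- `a ∈ 𝒢H∞` with explicit inverse `b ∈ H∞`. -/
def GHinfPair (a b : Linf) : Prop := IsHardyInf a ∧ IsHardyInf b ∧ a * b = 1

/-- `a ∈ 𝒢H∞`: `a` is invertible in the algebra `H∞`. -/
def IsGHinf (a : Linf) : Prop := ∃ b, GHinfPair a b

/-- `b ∈ 𝒢H̄∞`: `b` is the conjugate of an element of `𝒢H∞`. -/
def IsGHinfBar (b : Linf) : Prop := ∃ c, IsGHinf c ∧ b = star c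

/-- `a ∈ 𝒢L∞` with explicit inverse `b`. -/
def GLinfPair (a b : Linf) : Prop := a * b = 1 ∧ b * a = 1

/-- `a ∈ 𝒢L∞`: `a` is invertible in the algebra `L∞`. -/
def IsGLinf (a : Linf) : Prop := ∃ b, GLinfPair a b

/-- The kernel of an operator between subspaces of `L²`, viewed as a subspace of `L²`. -/
def subKer {K₁ K₂ : Submodule ℂ L2} (T : K₁ →L[ℂ] K₂) : Submodule ℂ L2 :=
  (LinearMap.ker (T : K₁ →ₗ[ℂ] K₂)).map K₁.subtype

/-- The range of an operator between subspaces of `L²`, viewed as a subspace of `L²`. -/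
def subRan {K₁ K₂ : Submodule ℂ L2} (T : K₁ →L[ℂ] K₂) : Submodule ℂ L2 :=
  (LinearMap.range (T : K₁ →ₗ[ℂ] K₂)).map K₂.subtype

/-- The image of a subspace `S ⊆ K₁` under `T : K₁ → K₂`, viewed as a subspace of `L²`. -/
def opImage {K₁ K₂ : Submodule ℂ L2} (T : K₁ →L[ℂ] K₂) (S : Submodule ℂ K₁) :
    Submodule ℂ L2 :=
  (S.map (T : K₁ →ₗ[ℂ] K₂)).map K₂.subtype

section Antilinear

variable {E : Type*} [NormedAddCommGroup E] [InnerProductSpace ℂ E]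

/-- `C` is antilinear: `C(f + a g) = C f + ā C g`. -/
def IsAntilinearMap (C : E → E) : Prop :=
  ∀ (f g : E) (a : ℂ), C (f + a • g) = C f + (starRingEnd ℂ a) • C g

/-- `Cs` is the antilinear adjoint of `C`: `⟨C f, g⟩ = conj ⟨f, Cs g⟩`. -/
def IsAntilinearAdjointOf (C Cs : E → E) : Prop :=
  ∀ f g : E, (inner ℂ (C f) g : ℂ) = (starRingEnd ℂ) (inner ℂ f (Cs g) : ℂ)

/-- `C` is an antilinear unitary: it is antilinear and its antilinear adjoint is its inverse. -/
def IsAntilinearUnitary (C : E → E) : Prop :=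
  IsAntilinearMap C ∧ ∃ Cs : E → E, IsAntilinearAdjointOf C Cs ∧
    Function.LeftInverse Cs C ∧ Function.RightInverse Cs C

/-- `T` is complex selfadjoint with respect to `C` (with inverse `Cinv`): `C T C⁻¹ = T*`. -/
def IsComplexSelfadjointWith [CompleteSpace E] (T : E →L[ℂ] E) (C Cinv : E → E) : Prop :=
  ∀ f : E, C (T (Cinv f)) = ContinuousLinearMap.adjoint T f

end Antilinear

/-! A bounded invertible `F : H → K` transports an antilinear unitary `C` on `K` to the antilinear
map `F⁻¹ C F` on `H`, whose antilinear adjoint is `F* C⁻¹ (F⁻¹)*`. An antilinear map with an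
antilinear adjoint is unitary exactly when it inverts its adjoint, and the inverse of
`F* C⁻¹ (F⁻¹)*` is `F* C (F⁻¹)*`; so `F⁻¹ C F` is unitary iff it equals `F* C (F⁻¹)*`. Composing
with `F` on the left and `F*` on the right turns this equation into `C (F F*) = (F F*) C`. -/

open ContinuousLinearMap Function

lemma ContinuousLinearMap.leftInverse_of_comp_eq_id {𝕜 M N : Type*} [Semiring 𝕜]
    [TopologicalSpace M] [AddCommMonoid M] [Module 𝕜 M]
    [TopologicalSpace N] [AddCommMonoid N] [Module 𝕜 N]
    {A : N →L[𝕜] M} {B : M →L[𝕜] N} (h : A.comp B = ContinuousLinearMap.id 𝕜 M) :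
    LeftInverse A B :=
  fun x => congr($h x)

section Conjugation

variable {V W : Type*} [NormedAddCommGroup V] [InnerProductSpace ℂ V]
  [NormedAddCommGroup W] [InnerProductSpace ℂ W]

lemma IsAntilinearAdjointOf.unique {C Cs Cs' : V → V} (h : IsAntilinearAdjointOf C Cs)
    (h' : IsAntilinearAdjointOf C Cs') : Cs = Cs' :=
  funext fun g => ext_inner_left ℂ fun f =>
    (starRingEnd ℂ).injective ((h f g).symm.trans (h' f g))

lemma IsAntilinearAdjointOf.isAntilinearUnitary_iff {C D G : V → V} (hC : IsAntilinearMap C)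
    (hD : IsAntilinearAdjointOf C D) (hGD : LeftInverse G D) (hDG : RightInverse G D) :
    IsAntilinearUnitary C ↔ C = G := by
  constructor
  · rintro ⟨-, Cs, hCs, -, hCCs⟩
    rw [hCs.unique hD] at hCCs
    exact hCCs.eq_rightInverse hDG
  · rintro rfl
    exact ⟨hC, D, hD, hDG, hGD⟩

lemma IsAntilinearMap.conj {C : W → W} (hC : IsAntilinearMap C) (A : W →L[ℂ] V)
    (B : V →L[ℂ] W) : IsAntilinearMap fun v => A (C (B v)) := by
  intro f g a
  dsimp only
  rw [map_add, map_smul, hC, map_add, map_smul]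

variable [CompleteSpace V] [CompleteSpace W]

lemma ContinuousLinearMap.leftInverse_adjoint_of_comp_eq_id {A : W →L[ℂ] V} {B : V →L[ℂ] W}
    (h : A.comp B = ContinuousLinearMap.id ℂ V) : LeftInverse (adjoint B) (adjoint A) := by
  refine leftInverse_of_comp_eq_id ?_
  rw [← adjoint_comp, h, adjoint_id]

lemma IsAntilinearAdjointOf.conj {C Cs : W → W} (hC : IsAntilinearAdjointOf C Cs)
    (A : W →L[ℂ] V) (B : V →L[ℂ] W) :
    IsAntilinearAdjointOf (fun v => A (C (B v))) fun v => adjoint B (Cs (adjoint A v)) := by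
  intro f g
  rw [← adjoint_inner_right, hC, adjoint_inner_right]

theorem IsAntilinearUnitary.conj_isAntilinearUnitary_iff {C : W → W}
    (hC : IsAntilinearUnitary C) {A : W →L[ℂ] V} {B : V →L[ℂ] W}
    (hAB : A.comp B = ContinuousLinearMap.id ℂ V)
    (hBA : B.comp A = ContinuousLinearMap.id ℂ W) :
    IsAntilinearUnitary (fun v => A (C (B v))) ↔
      ∀ v, A (C (B v)) = adjoint B (C (adjoint A v)) := by
  obtain ⟨hC, Cs, hCs, hCsC, hCCs⟩ := hC
  have hAB' : LeftInverse (adjoint B) (adjoint A) := leftInverse_adjoint_of_comp_eq_id hAB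
  have hBA' : RightInverse (adjoint B) (adjoint A) := leftInverse_adjoint_of_comp_eq_id hBA
  rw [(hCs.conj A B).isAntilinearUnitary_iff (G := fun v => adjoint B (C (adjoint A v)))
    (hC.conj A B) (fun v => by dsimp only; rw [hBA' (Cs _), hCCs (adjoint A v), hAB' v])
    (fun v => by dsimp only; rw [hBA' (C _), hCsC (adjoint A v), hAB' v]), funext_iff]

end Conjugation

theorem Function.commute_comp_iff {α β : Type*} (C : β → β) {F : α → β} {Finv : β → α}
    {E : β → α} {Einv : α → β} (hF : LeftInverse Finv F) (hF' : RightInverse Finv F)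
    (hE : LeftInverse E Einv) (hE' : RightInverse E Einv) :
    Function.Commute C (F ∘ E) ↔ ∀ h, Finv (C (F h)) = E (C (Einv h)) := by
  constructor
  · intro hC h
    have hCh := hC (Einv h)
    rw [comp_apply, hE h, comp_apply] at hCh
    rw [hCh, hF]
  · intro hC k
    have hCk := hC (E k)
    rw [hE' k] at hCk
    rw [comp_apply, comp_apply, ← hCk, hF']

/-- Proposition 4.2: for an antilinear unitary `C_K` on `K`, an
invertible `F : H → K` with `E = F*`, and `C_H = F⁻¹ C_K F`, TFAE:
(a) `C_H` is an antilinear unitary on `H`; (b) `C_K (FE) = (FE) C_K`;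
(c) `C_H = E C_K E⁻¹`. -/
theorem statement15 (H K : Submodule ℂ L2) [CompleteSpace H] [CompleteSpace K]
    (CK : K → K) (hCK : IsAntilinearUnitary CK)
    (F : H →L[ℂ] K) (Finv : K →L[ℂ] H)
    (hF1 : Finv.comp F = ContinuousLinearMap.id ℂ H)
    (hF2 : F.comp Finv = ContinuousLinearMap.id ℂ K) :
    (IsAntilinearUnitary (fun f : H => Finv (CK (F f))) ↔
      ∀ f : K, CK (F (ContinuousLinearMap.adjoint F f)) =
        F (ContinuousLinearMap.adjoint F (CK f))) ∧
    (IsAntilinearUnitary (fun f : H => Finv (CK (F f))) ↔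
      ∀ f : H, Finv (CK (F f)) =
        ContinuousLinearMap.adjoint F (CK (ContinuousLinearMap.adjoint Finv f))) := by
  have hac := hCK.conj_isAntilinearUnitary_iff hF1 hF2
  have hbc := commute_comp_iff CK (leftInverse_of_comp_eq_id hF1)
    (leftInverse_of_comp_eq_id hF2) (leftInverse_adjoint_of_comp_eq_id hF1)
    (leftInverse_adjoint_of_comp_eq_id hF2)
  exact ⟨hac.trans hbc.symm, hac⟩
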